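/- Let Λ, β, ν, γ be positive real constants with ξ₀ := β·Λ/(ν·(ν+γ)) < 1. Let S, I : ℝ → ℝ with S continuous, 0 ≤ S(t) ≤ Λ/ν for all t ≥ 0, I differentiable with I'(t) = (β·S(t) − ν − γ)·I(t) and I(0) > 0. Then I(t) ≤ I(0)·exp((ν+γ)(ξ₀ − 1)·t) for all t ≥ 0, and consequently I(t) → 0 as t → ∞. -/

import Mathlib

/-!
The infected class solves the linear equation `I' = c I` with `c = β S - ν - γ`, so
`I t = I 0 * exp (∫₀ᵗ c)`. Since `S ≤ Λ / ν`, the rate `c` never exceeds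
`βΛ/ν - (ν + γ) = (ν + γ)(ξ₀ - 1)`, which is negative when `ξ₀ < 1`; hence `I` is squeezed between
`0` and a decaying exponential.
-/

open Real Filter Topology

/-- Integrating factor: `I · exp (-∫₀ᵗ c)` has zero derivative on `[0, ∞)`. -/
theorem eq_mul_exp_integral_of_hasDerivAt {c I : ℝ → ℝ} (hc : Continuous c)
    (hI : ∀ t ≥ (0:ℝ), HasDerivAt I (c t * I t) t) {t : ℝ} (ht : 0 ≤ t) :
    I t = I 0 * exp (∫ s in (0:ℝ)..t, c s) := by
  set u : ℝ → ℝ := fun t => ∫ s in (0:ℝ)..t, c s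
  set G : ℝ → ℝ := fun t => I t * exp (-u t)
  have hG : ∀ x ≥ (0:ℝ), HasDerivAt G 0 x := by
    intro x hx
    have hu : HasDerivAt u (c x) x := (hc.integral_hasStrictDerivAt 0 x).hasDerivAt
    exact ((hI x hx).mul hu.neg.exp).congr_deriv (by ring)
  have hGt : G t = G 0 :=
    constant_of_has_deriv_right_zero (fun x hx => (hG x hx.1).continuousAt.continuousWithinAt)
      (fun x hx => (hG x hx.1).hasDerivWithinAt) t ⟨ht, le_rfl⟩
  have hu0 : u 0 = 0 := intervalIntegral.integral_same
  simp only [G, hu0, neg_zero, exp_zero, mul_one] at hGt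
  rw [← hGt, mul_assoc, ← exp_add, neg_add_cancel, exp_zero, mul_one]

theorem intervalIntegral_le_mul_of_le {c : ℝ → ℝ} (hc : Continuous c) {a t : ℝ} (ht : 0 ≤ t)
    (hca : ∀ s ∈ Set.Icc 0 t, c s ≤ a) : ∫ s in (0:ℝ)..t, c s ≤ a * t := by
  calc ∫ s in (0:ℝ)..t, c s ≤ ∫ _ in (0:ℝ)..t, a :=
        intervalIntegral.integral_mono_on ht (hc.intervalIntegrable _ _) intervalIntegrable_const hca
    _ = a * t := by simp [mul_comm]

theorem tendsto_zero_of_nonneg_of_le_mul_exp {f : ℝ → ℝ} {C a : ℝ} (ha : a < 0)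
    (hf : ∀ᶠ t in atTop, 0 ≤ f t ∧ f t ≤ C * exp (a * t)) : Tendsto f atTop (𝓝 0) := by
  have hexp : Tendsto (fun t => C * exp (a * t)) atTop (𝓝 0) := by
    simpa using (tendsto_exp_atBot.comp (tendsto_id.const_mul_atTop_of_neg ha)).const_mul C
  exact tendsto_of_tendsto_of_tendsto_of_le_of_le' tendsto_const_nhds hexp
    (hf.mono fun _ h => h.1) (hf.mono fun _ h => h.2)

theorem sub_le_mul_reproductionNumber_sub_one {Λ β ν γ s : ℝ} (hβ : 0 ≤ β) (hν : 0 < ν)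
    (hνγ : 0 < ν + γ) (hs : s ≤ Λ / ν) :
    β * s - ν - γ ≤ (ν + γ) * (β * Λ / (ν * (ν + γ)) - 1) := by
  have hξ : (ν + γ) * (β * Λ / (ν * (ν + γ)) - 1) = β * (Λ / ν) - ν - γ := by
    field_simp
    ring
  rw [hξ]
  gcongr

theorem infected_extinction_deterministic_general
    (Λ β ν γ : ℝ) (hβ : 0 < β) (hν : 0 < ν) (hγ : 0 < γ)
    (ξ₀ : ℝ) (hξ₀ : ξ₀ = β * Λ / (ν * (ν + γ))) (hξ : ξ₀ < 1)
    (S I : ℝ → ℝ) (hS : Continuous S)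
    (hSbd : ∀ t ≥ (0:ℝ), 0 ≤ S t ∧ S t ≤ Λ / ν)
    (hI : Differentiable ℝ I)
    (hI' : ∀ t ≥ (0:ℝ), deriv I t = (β * S t - ν - γ) * I t)
    (hI0 : 0 < I 0) :
    (∀ t ≥ (0:ℝ), I t ≤ I 0 * Real.exp ((ν + γ) * (ξ₀ - 1) * t)) ∧
      Filter.Tendsto I Filter.atTop (nhds 0) := by
  have hνγ : 0 < ν + γ := by linarith
  have hrate : ∀ t ≥ (0:ℝ), β * S t - ν - γ ≤ (ν + γ) * (ξ₀ - 1) := fun t ht =>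
    hξ₀ ▸ sub_le_mul_reproductionNumber_sub_one hβ.le hν hνγ (hSbd t ht).2
  have hsol : ∀ t ≥ (0:ℝ), I t = I 0 * exp (∫ s in (0:ℝ)..t, (β * S s - ν - γ)) :=
    fun t ht => eq_mul_exp_integral_of_hasDerivAt (by fun_prop)
      (fun x hx => hI' x hx ▸ (hI x).hasDerivAt) ht
  have hbound : ∀ t ≥ (0:ℝ), I t ≤ I 0 * exp ((ν + γ) * (ξ₀ - 1) * t) := by
    intro t ht
    rw [hsol t ht]
    gcongr
    exact intervalIntegral_le_mul_of_le (by fun_prop) ht fun s hs => hrate s hs.1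
  have hdecay : (ν + γ) * (ξ₀ - 1) < 0 := mul_neg_of_pos_of_neg hνγ (by linarith)
  refine ⟨hbound, tendsto_zero_of_nonneg_of_le_mul_exp (C := I 0) hdecay ?_⟩
  filter_upwards [eventually_ge_atTop 0] with t ht
  exact ⟨hsol t ht ▸ by positivity, hbound t ht⟩

theorem infected_extinction_deterministic
    (Λ β ν γ : ℝ) (hΛ : 0 < Λ) (hβ : 0 < β) (hν : 0 < ν) (hγ : 0 < γ)
    (ξ₀ : ℝ) (hξ₀ : ξ₀ = β * Λ / (ν * (ν + γ))) (hξ : ξ₀ < 1)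
    (S I : ℝ → ℝ) (hS : Continuous S)
    (hSbd : ∀ t ≥ (0:ℝ), 0 ≤ S t ∧ S t ≤ Λ / ν)
    (hI : Differentiable ℝ I)
    (hI' : ∀ t ≥ (0:ℝ), deriv I t = (β * S t - ν - γ) * I t)
    (hI0 : 0 < I 0) :
    (∀ t ≥ (0:ℝ), I t ≤ I 0 * Real.exp ((ν + γ) * (ξ₀ - 1) * t)) ∧
      Filter.Tendsto I Filter.atTop (nhds 0) :=
  infected_extinction_deterministic_general Λ β ν γ hβ hν hγ ξ₀ hξ₀ hξ S I hS hSbd hI hI' hI0
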